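/- arXiv:0804.3788 — 2 statements merged into one kernel-verified Lean document; each statement's English description precedes it below -/
import Mathlib

section
/- Let 0 → A → B → C → 0 be a short exact sequence of I-modules (I a group) such that A is an induced (coinduced from the trivial subgroup over a finite index subgroup, i.e. of the form ℤ[I/J]-free) I-module with A_I torsion-free. Then the map on coinvariants A_I → B_I is injective and B_I/A_I ≅ C_I. -/
/-- The subgroup of an `I`-module `M` generated by the elements `m - g • m`;
the coinvariants `M_I` are the quotient `M ⧸ coinvSub I M`. -/
def HR.coinvSub (I M : Type*) [Group I] [AddCommGroup M] [DistribMulAction I M] :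
    AddSubgroup M :=
  AddSubgroup.closure {x | ∃ (g : I) (m : M), x = m - g • m}

/-!
The norm map `N = ∑_g g • -` kills coinvariants and commutes with equivariant maps, so an element
`a` of `A` whose image lies in the coinvariant subgroup of `B` has `N a = 0`. On the permutation
module `ℤ[X]` the degree satisfies `deg (N a) = |I| · deg a`, and for transitive `X` every element
of degree zero is a sum of elements `m - g • m`; hence `a` is already coinvariant in `A`.
The identification of the cokernel with `C_I` holds for any equivariant surjection `B → C`, because
it maps the coinvariant subgroup of `B` onto that of `C`.
-/

namespace HR

open QuotientAddGroup

section Coinvariants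

variable {I M N : Type*} [Group I] [AddCommGroup M] [DistribMulAction I M] [AddCommGroup N]

theorem sub_smul_mem_coinvSub (g : I) (m : M) : m - g • m ∈ coinvSub I M :=
  AddSubgroup.subset_closure ⟨g, m, rfl⟩

theorem coinvSub_le_iff {H : AddSubgroup M} :
    coinvSub I M ≤ H ↔ ∀ (g : I) (m : M), m - g • m ∈ H := by
  rw [coinvSub, AddSubgroup.closure_le]
  exact ⟨fun h g m => h ⟨g, m, rfl⟩, fun h _ ⟨g, m, hx⟩ => hx ▸ h g m⟩

theorem coinvSub_le_ker {f : M →+ N} (hf : ∀ (g : I) (m : M), f (g • m) = f m) :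
    coinvSub I M ≤ f.ker :=
  coinvSub_le_iff.2 fun g m => by simp [hf]

variable [DistribMulAction I N]

theorem mk_smul (g : I) (m : M) : (mk (g • m) : M ⧸ coinvSub I M) = mk m :=
  eq_iff_sub_mem.2 <| by simpa using neg_mem (sub_smul_mem_coinvSub g m)

theorem map_coinvSub {f : M →+ N} (hf : ∀ (g : I) (m : M), f (g • m) = g • f m)
    (hsurj : Function.Surjective f) : (coinvSub I M).map f = coinvSub I N := by
  rw [coinvSub, coinvSub, AddMonoidHom.map_closure]
  congr 1
  ext n
  constructor
  · rintro ⟨_, ⟨g, m, rfl⟩, rfl⟩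
    exact ⟨g, f m, by simp [hf]⟩
  · rintro ⟨g, n, rfl⟩
    obtain ⟨m, rfl⟩ := hsurj n
    exact ⟨_, ⟨g, m, rfl⟩, by simp [hf]⟩

noncomputable def quotientSupKerEquiv (f : M →+ N) (hf : ∀ (g : I) (m : M), f (g • m) = g • f m)
    (hsurj : Function.Surjective f) : M ⧸ (coinvSub I M ⊔ f.ker) ≃+ N ⧸ coinvSub I N :=
  (quotientAddEquivOfEq <| by
      rw [← AddSubgroup.comap_map_eq, map_coinvSub hf hsurj, ← AddMonoidHom.comap_ker,
        ker_mk']).trans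
    (quotientKerEquivOfSurjective ((mk' _).comp f) ((mk'_surjective _).comp hsurj))

theorem quotientSupKerEquiv_mk (f : M →+ N) (hf : ∀ (g : I) (m : M), f (g • m) = g • f m)
    (hsurj : Function.Surjective f) (m : M) :
    quotientSupKerEquiv f hf hsurj (mk m) = mk (f m) :=
  rfl

end Coinvariants

section Norm

variable (I M : Type*) {N : Type*} [Group I] [Fintype I] [AddCommGroup M] [DistribMulAction I M]
  [AddCommGroup N] [DistribMulAction I N]

def normHom : M →+ M :=
  ∑ g : I, DistribSMul.toAddMonoidHom M g

variable {I M}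

theorem normHom_apply (m : M) : normHom I M m = ∑ g : I, g • m := by
  simp [normHom]

theorem normHom_smul (g : I) (m : M) : normHom I M (g • m) = normHom I M m := by
  simp only [normHom_apply, smul_smul]
  exact Fintype.sum_equiv (Equiv.mulRight g) _ _ fun _ => rfl

theorem coinvSub_le_ker_normHom : coinvSub I M ≤ (normHom I M).ker :=
  coinvSub_le_ker normHom_smul

theorem map_normHom {f : M →+ N} (hf : ∀ (g : I) (m : M), f (g • m) = g • f m) (m : M) :
    f (normHom I M m) = normHom I N (f m) := by
  simp [normHom_apply, hf]

theorem mem_coinvSub_of_map_mem {f : M →+ N} (hf : ∀ (g : I) (m : M), f (g • m) = g • f m)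
    (hinj : Function.Injective f) (hker : (normHom I M).ker ≤ coinvSub I M) {m : M}
    (hm : f m ∈ coinvSub I N) : m ∈ coinvSub I M :=
  hker <| hinj <| by rw [map_normHom hf, coinvSub_le_ker_normHom hm, map_zero]

end Norm

section Permutation

variable {I A X : Type*} [Group I] [AddCommGroup A] [DistribMulAction I A] [MulAction I X]
  {b : A ≃+ (X →₀ ℤ)}

theorem apply_smul_eq_mapDomain (hb : ∀ (g : I) (a : A) (x : X), b (g • a) x = b a (g⁻¹ • x))
    (g : I) (a : A) : b (g • a) = (b a).mapDomain (g • ·) := by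
  change _ = (b a).mapDomain (MulAction.toPerm g)
  rw [← Finsupp.equivMapDomain_eq_mapDomain]
  ext x
  simp [hb]

theorem degree_apply_smul (hb : ∀ (g : I) (a : A) (x : X), b (g • a) x = b a (g⁻¹ • x))
    (g : I) (a : A) : (b (g • a)).degree = (b a).degree := by
  rw [apply_smul_eq_mapDomain hb, Finsupp.degree_mapDomain]

theorem mk_symm_apply [MulAction.IsPretransitive I X]
    (hb : ∀ (g : I) (a : A) (x : X), b (g • a) x = b a (g⁻¹ • x)) (x₀ : X) (f : X →₀ ℤ) :
    (mk (b.symm f) : A ⧸ coinvSub I A) = f.degree • mk (b.symm (Finsupp.single x₀ 1)) := by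
  induction f using Finsupp.induction_linear with
  | zero => simp
  | add f₁ f₂ h₁ h₂ => simp [h₁, h₂, add_smul]
  | single x n =>
    obtain ⟨g, rfl⟩ := MulAction.exists_smul_eq I x₀ x
    have hg : b.symm (Finsupp.single (g • x₀) 1) = g • b.symm (Finsupp.single x₀ 1) :=
      b.symm_apply_eq.2 <| by
        rw [apply_smul_eq_mapDomain hb, b.apply_symm_apply, Finsupp.mapDomain_single]
    rw [Finsupp.degree_single, ← Finsupp.smul_single_one, map_zsmul, mk_zsmul, hg, mk_smul]

theorem mem_coinvSub_of_degree_eq_zero [MulAction.IsPretransitive I X]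
    (hb : ∀ (g : I) (a : A) (x : X), b (g • a) x = b a (g⁻¹ • x)) {a : A}
    (ha : (b a).degree = 0) : a ∈ coinvSub I A := by
  rcases isEmpty_or_nonempty X with _ | ⟨⟨x₀⟩⟩
  · rw [b.injective (Subsingleton.elim (b a) (b 0))]
    exact zero_mem _
  · rw [← eq_zero_iff, ← b.symm_apply_apply a, mk_symm_apply hb x₀, ha, zero_smul]

theorem ker_normHom_le_coinvSub [Fintype I] [MulAction.IsPretransitive I X]
    (hb : ∀ (g : I) (a : A) (x : X), b (g • a) x = b a (g⁻¹ • x)) :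
    (normHom I A).ker ≤ coinvSub I A := by
  intro a ha
  have hdeg : (b (normHom I A a)).degree = Fintype.card I • (b a).degree := by
    simp [normHom_apply, degree_apply_smul hb]
  rw [AddMonoidHom.mem_ker.1 ha, map_zero, map_zero, eq_comm, smul_eq_zero] at hdeg
  exact mem_coinvSub_of_degree_eq_zero hb (hdeg.resolve_left Fintype.card_ne_zero)

end Permutation

end HR

theorem statement5_general {I A B C : Type*} [Group I] [Finite I]
    [AddCommGroup A] [AddCommGroup B] [AddCommGroup C]
    [DistribMulAction I A] [DistribMulAction I B] [DistribMulAction I C]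
    (ι : A →+ B) (π : B →+ C)
    (hι : ∀ (g : I) (a : A), ι (g • a) = g • ι a)
    (hπ : ∀ (g : I) (b : B), π (g • b) = g • π b)
    (hinj : Function.Injective ι) (hsurj : Function.Surjective π)
    (hexact : ∀ b : B, π b = 0 ↔ b ∈ ι.range)
    -- `A` is the permutation module `ℤ[X]` on a transitive `I`-set `X`
    (X : Type*) [MulAction I X] [MulAction.IsPretransitive I X]
    (b : A ≃+ (X →₀ ℤ))
    (hb : ∀ (g : I) (a : A) (x : X), b (g • a) x = b a (g⁻¹ • x)) :
    (∀ a : A, ι a ∈ HR.coinvSub I B → a ∈ HR.coinvSub I A) ∧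
    ∃ e : (B ⧸ (HR.coinvSub I B ⊔ ι.range)) ≃+ (C ⧸ HR.coinvSub I C),
      ∀ b : B, e (QuotientAddGroup.mk b) = QuotientAddGroup.mk (π b) := by
  have := Fintype.ofFinite I
  refine ⟨fun a ha => HR.mem_coinvSub_of_map_mem hι hinj (HR.ker_normHom_le_coinvSub hb) ha, ?_⟩
  have hker : π.ker = ι.range := AddSubgroup.ext hexact
  exact ⟨(QuotientAddGroup.quotientAddEquivOfEq (by rw [hker])).trans
    (HR.quotientSupKerEquiv π hπ hsurj), HR.quotientSupKerEquiv_mk π hπ hsurj⟩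

/-- Let `0 → A → B → C → 0` be a short exact sequence of
`I`-modules (finitely generated free abelian groups, `I` finite) such that `A`
is an induced module `ℤ[I/J]`, i.e. the permutation module on a transitive
`I`-set `X` (here realized by an equivariant isomorphism `A ≃ (X →₀ ℤ)`).
Then `A_I → B_I` is injective and `B_I / A_I ≅ C_I`. -/
theorem statement5 {I A B C : Type*} [Group I] [Finite I]
    [AddCommGroup A] [AddCommGroup B] [AddCommGroup C]
    [AddGroup.FG A] [AddGroup.FG B] [AddGroup.FG C]
    [NoZeroSMulDivisors ℤ A] [NoZeroSMulDivisors ℤ B] [NoZeroSMulDivisors ℤ C]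
    [DistribMulAction I A] [DistribMulAction I B] [DistribMulAction I C]
    (ι : A →+ B) (π : B →+ C)
    (hι : ∀ (g : I) (a : A), ι (g • a) = g • ι a)
    (hπ : ∀ (g : I) (b : B), π (g • b) = g • π b)
    (hinj : Function.Injective ι) (hsurj : Function.Surjective π)
    (hexact : ∀ b : B, π b = 0 ↔ b ∈ ι.range)
    -- `A` is the permutation module `ℤ[X]` on a transitive `I`-set `X`
    (X : Type*) [Fintype X] [MulAction I X] [MulAction.IsPretransitive I X]
    (b : A ≃+ (X →₀ ℤ))
    (hb : ∀ (g : I) (a : A) (x : X), b (g • a) x = b a (g⁻¹ • x)) :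
    (∀ a : A, ι a ∈ HR.coinvSub I B → a ∈ HR.coinvSub I A) ∧
    ∃ e : (B ⧸ (HR.coinvSub I B ⊔ ι.range)) ≃+ (C ⧸ HR.coinvSub I C),
      ∀ b : B, e (QuotientAddGroup.mk b) = QuotientAddGroup.mk (π b) :=
  statement5_general ι π hι hπ hinj hsurj hexact X b hb
end

section
/- Let G be a group containing subgroups N, U_f⁺, U_f⁻ for points f in a set, and suppose for two parahoric-type subgroups P, P' the Iwahori factorizations P = (N ∩ P)·U⁺·U⁻ and P' = U⁻·U⁺·(N ∩ P') hold, together with the absorption property U_f⁻ · U_{f'}⁻ ⊆ U_{f'}⁻. Then P·P' = (N ∩ P) · U⁺ · U'⁺ · U'⁻ · (N ∩ P'). In particular any element of N ∩ (P·P') can be written m₁⁻¹ u m₂⁻¹ with m₁ ∈ N ∩ P, m₂ ∈ N ∩ P', u ∈ U⁺U'⁺U'⁻ ⊆ U⁺·U⁻-type product. -/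
open Pointwise

/-- Abstract Iwahori factorization computation: if
`P = (N ∩ P)·U⁺·U⁻`, `P' = U'⁻·U'⁺·(N ∩ P') = U'⁺·U'⁻·(N ∩ P')` and
`U⁻·U'⁻ ⊆ U'⁻`, then `P·P' = (N ∩ P)·U⁺·U'⁺·U'⁻·(N ∩ P')`; in particular every
element of `N ∩ (P·P')` can be written `m₁⁻¹ · u · m₂⁻¹` with `m₁ ∈ N ∩ P`,
`m₂ ∈ N ∩ P'` and `u ∈ U⁺·U'⁺·U'⁻`. -/
theorem statement18 {G : Type*} [Group G]
    (N P P' Uplus Uminus U'plus U'minus : Subgroup G)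
    (hP : (P : Set G) = ((N ⊓ P : Subgroup G) : Set G) * (Uplus : Set G) * (Uminus : Set G))
    (hP'₁ : (P' : Set G) =
      (U'minus : Set G) * (U'plus : Set G) * ((N ⊓ P' : Subgroup G) : Set G))
    (hP'₂ : (P' : Set G) =
      (U'plus : Set G) * (U'minus : Set G) * ((N ⊓ P' : Subgroup G) : Set G))
    (habs : (Uminus : Set G) * (U'minus : Set G) ⊆ (U'minus : Set G)) :
    (P : Set G) * (P' : Set G) =
      ((N ⊓ P : Subgroup G) : Set G) * (Uplus : Set G) * (U'plus : Set G) *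
        (U'minus : Set G) * ((N ⊓ P' : Subgroup G) : Set G) ∧
    ∀ n ∈ N, (n : G) ∈ (P : Set G) * (P' : Set G) →
      ∃ m₁ ∈ N ⊓ P, ∃ m₂ ∈ N ⊓ P',
        ∃ u ∈ (Uplus : Set G) * (U'plus : Set G) * (U'minus : Set G),
          n = m₁⁻¹ * u * m₂⁻¹ := by
  have habsorb : (Uminus : Set G) * (P' : Set G) = (P' : Set G) := by
    apply Set.Subset.antisymm
    · calc (Uminus : Set G) * (P' : Set G)
          = ((Uminus : Set G) * (U'minus : Set G)) * ((U'plus : Set G) *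
              ((N ⊓ P' : Subgroup G) : Set G)) := by rw [hP'₁]; simp [mul_assoc]
        _ ⊆ (U'minus : Set G) * ((U'plus : Set G) * ((N ⊓ P' : Subgroup G) : Set G)) :=
            Set.mul_subset_mul_right habs
        _ = (P' : Set G) := by rw [hP'₁, mul_assoc]
    · exact Set.subset_mul_right _ (Subgroup.one_mem Uminus)
  have hmain : (P : Set G) * (P' : Set G) =
      ((N ⊓ P : Subgroup G) : Set G) * (Uplus : Set G) * (U'plus : Set G) *
        (U'minus : Set G) * ((N ⊓ P' : Subgroup G) : Set G) := by
    calc (P : Set G) * (P' : Set G)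
        = ((N ⊓ P : Subgroup G) : Set G) * (Uplus : Set G) *
            ((Uminus : Set G) * (P' : Set G)) := by rw [hP, mul_assoc]
      _ = ((N ⊓ P : Subgroup G) : Set G) * (Uplus : Set G) * (P' : Set G) := by rw [habsorb]
      _ = ((N ⊓ P : Subgroup G) : Set G) * (Uplus : Set G) * (U'plus : Set G) *
            (U'minus : Set G) * ((N ⊓ P' : Subgroup G) : Set G) := by
          rw [hP'₂]; simp [mul_assoc]
  refine ⟨hmain, fun n hn hnPP' => ?_⟩
  rw [hmain] at hnPP'
  obtain ⟨x, hx, m₂, hm₂, hxm⟩ := hnPP'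
  obtain ⟨y, hy, u₃, hu₃, hyu⟩ := hx
  obtain ⟨z, hz, u₂, hu₂, hzu⟩ := hy
  obtain ⟨m₁, hm₁, u₁, hu₁, hmu⟩ := hz
  refine ⟨m₁⁻¹, (N ⊓ P).inv_mem hm₁, m₂⁻¹, (N ⊓ P').inv_mem hm₂, u₁ * u₂ * u₃,
    ⟨u₁ * u₂, ⟨u₁, hu₁, u₂, hu₂, rfl⟩, u₃, hu₃, rfl⟩, ?_⟩
  simp only [inv_inv]
  rw [← hxm, ← hyu, ← hzu, ← hmu]
  group
end
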